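/- arXiv:1805.02630 — 8 statements merged into one kernel-verified Lean document; each statement's English description precedes it below -/
import Mathlib

section
/- Let (V,q) be a quadratic space over a commutative ring R embedded in an associative R-algebra A, i.e. V ⊆ A and q(v) = v·α(v) = α(v)·v for an isometry α of (V,q). Then for all v, w ∈ V, the element v·w·v lies in V. -/
/-! Write `w = α u`. Polarizing `v·α(v) = q(v)` gives `v·α(u) + u·α(v) = b(v, u)`, where `b` is
the polar form, so `v·w·v = b(v, u)·v - u·α(v)·v = b(v, u)·v - q(v)·u`, a linear combination of
`v` and `u`. -/

section

variable {R M A : Type*} [CommRing R] [AddCommGroup M] [Module R M] [Ring A] [Algebra R A]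
  (Q : QuadraticMap R M R) {f g : M →ₗ[R] A}

theorem mul_add_mul_swap_eq_algebraMap_polar
    (hfg : ∀ m, f m * g m = algebraMap R A (Q m)) (x y : M) :
    f x * g y + f y * g x = algebraMap R A (QuadraticMap.polar Q x y) := by
  have hxy := hfg (x + y)
  simp only [map_add, add_mul, mul_add, hfg x, hfg y] at hxy
  simp only [QuadraticMap.polar, map_sub, ← hxy]
  noncomm_ring

theorem mul_mul_eq_polar_smul_sub_smul
    (hfg : ∀ m, f m * g m = algebraMap R A (Q m)) (hgf : ∀ m, g m * f m = algebraMap R A (Q m))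
    (x y : M) :
    f x * g y * f x = QuadraticMap.polar Q x y • f x - Q x • f y := by
  have hxy : f x * g y = algebraMap R A (QuadraticMap.polar Q x y) - f y * g x := by
    rw [eq_sub_iff_add_eq, mul_add_mul_swap_eq_algebraMap_polar Q hfg]
  rw [hxy, sub_mul, mul_assoc, hgf, Algebra.smul_def, Algebra.smul_def, Algebra.commutes (Q x)]

end

theorem embedding_vwv_mem_general {R A : Type*} [CommRing R] [Ring A] [Algebra R A]
    (V : Submodule R A) (Q : QuadraticForm R V)
    (α : V ≃ₗ[R] V)
    (hemb : ∀ v : V, (v : A) * (α v : A) = algebraMap R A (Q v) ∧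
      (α v : A) * (v : A) = algebraMap R A (Q v)) :
    ∀ v w : V, (v : A) * (w : A) * (v : A) ∈ V := by
  intro v w
  have hvwv := mul_mul_eq_polar_smul_sub_smul Q (f := V.subtype) (g := V.subtype ∘ₗ α.toLinearMap)
    (fun m => (hemb m).1) (fun m => (hemb m).2) v (α.symm w)
  simp only [Submodule.subtype_apply, LinearMap.coe_comp, Function.comp_apply,
    LinearEquiv.coe_coe, LinearEquiv.apply_symm_apply] at hvwv
  rw [hvwv]
  exact V.sub_mem (V.smul_mem _ v.2) (V.smul_mem _ (α.symm w).2)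

/-- If (V,q) is a (non-degenerate) quadratic space embedded in an
associative algebra A via an isometry α with v·α(v) = α(v)·v = q(v)·1, then
for all v, w ∈ V the element v·w·v lies in V. -/
theorem embedding_vwv_mem {R A : Type*} [CommRing R] [Ring A] [Algebra R A]
    (V : Submodule R A) (Q : QuadraticForm R V)
    (hnd : ∀ x : V, (∀ v : V, QuadraticMap.polar Q x v = 0) → x = 0)
    (α : V ≃ₗ[R] V) (hα : ∀ v : V, Q (α v) = Q v)
    (hemb : ∀ v : V, (v : A) * (α v : A) = algebraMap R A (Q v) ∧
      (α v : A) * (v : A) = algebraMap R A (Q v)) :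
    ∀ v w : V, (v : A) * (w : A) * (v : A) ∈ V :=
  embedding_vwv_mem_general V Q α hemb
end

section
/- Let (V,q) be a quadratic space embedded in an algebra A with isometry α (written v̄ = α(v)) satisfying q(v) = v·v̄ = v̄·v. Then for all v, w ∈ V, the conjugate of vwv satisfies α(vwv) = α(v)·α(w)·α(v). -/
/-!
Polarizing `v * α v = Q v` gives `x * α z + z * α x = polar Q x z`, so together with
`α x * x = Q x` one gets `x * α z * x = polar Q x z • x - Q x • z`. Thus `v w v` is an explicit
linear combination of `v` and `α⁻¹ w`, and applying `α` to it gives the same combination of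
`α v` and `w` as the formula does for `α v * α w * α v`, because `α` preserves `Q` and hence
`polar Q`.
-/

open QuadraticMap

section

variable {R A F : Type*} [CommRing R] [Ring A] [Algebra R A] {V : Submodule R A}
  [FunLike F V V] [AddMonoidHomClass F V V]

theorem QuadraticMap.polar_map_of_forall_map_eq {Q : QuadraticForm R V} {f : F}
    (hf : ∀ v, Q (f v) = Q v) (x y : V) : polar Q (f x) (f y) = polar Q x y := by
  simp only [polar, ← map_add, hf]

theorem mul_conj_add_mul_conj {Q : QuadraticForm R V} {α : F}
    (hmul : ∀ v : V, (v : A) * (α v : A) = algebraMap R A (Q v)) (x z : V) :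
    (x : A) * (α z : A) + (z : A) * (α x : A) = algebraMap R A (polar Q x z) := by
  have hxz := hmul (x + z)
  simp only [map_add, Submodule.coe_add] at hxz
  rw [polar, map_sub, map_sub, ← hxz, ← hmul x, ← hmul z]
  noncomm_ring

theorem mul_conj_mul {Q : QuadraticForm R V} {α : F}
    (hmul : ∀ v : V, (v : A) * (α v : A) = algebraMap R A (Q v))
    (hmul' : ∀ v : V, (α v : A) * (v : A) = algebraMap R A (Q v)) (x z : V) :
    (x : A) * (α z : A) * (x : A) = polar Q x z • (x : A) - Q x • (z : A) := by
  calc (x : A) * (α z : A) * (x : A)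
      = ((x : A) * (α z : A) + (z : A) * (α x : A)) * (x : A)
          - (z : A) * ((α x : A) * (x : A)) := by noncomm_ring
    _ = _ := by
      rw [mul_conj_add_mul_conj hmul, hmul', Algebra.smul_def, Algebra.smul_def,
        Algebra.commutes (Q x)]

end

theorem embedding_conj_vwv_general {R A : Type*} [CommRing R] [Ring A] [Algebra R A]
    (V : Submodule R A) (Q : QuadraticForm R V)
    (α : V ≃ₗ[R] V) (hα : ∀ v : V, Q (α v) = Q v)
    (hemb : ∀ v : V, (v : A) * (α v : A) = algebraMap R A (Q v) ∧
      (α v : A) * (v : A) = algebraMap R A (Q v))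
    (hmem : ∀ v w : V, (v : A) * (w : A) * (v : A) ∈ V) :
    ∀ v w : V,
      ((α ⟨(v : A) * (w : A) * (v : A), hmem v w⟩ : V) : A) =
        (α v : A) * (α w : A) * (α v : A) := by
  have hmul := fun v => (hemb v).1
  have hmul' := fun v => (hemb v).2
  intro v w
  obtain ⟨z, rfl⟩ := α.surjective w
  have hvzv : (⟨(v : A) * (α z : A) * (v : A), hmem v (α z)⟩ : V) = polar Q v z • v - Q v • z :=
    Subtype.ext (mul_conj_mul hmul hmul' v z)
  rw [hvzv, map_sub, map_smul, map_smul, mul_conj_mul hmul hmul',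
    polar_map_of_forall_map_eq hα, hα, Submodule.coe_sub, Submodule.coe_smul, Submodule.coe_smul]

/-- For an embedding (V,q) ⊆ A with isometry α (v̄ = α v) and
q(v) = v·v̄ = v̄·v, the conjugate of vwv satisfies α(vwv) = α(v)·α(w)·α(v). -/
theorem embedding_conj_vwv {R A : Type*} [CommRing R] [Ring A] [Algebra R A]
    (V : Submodule R A) (Q : QuadraticForm R V)
    (hnd : ∀ x : V, (∀ v : V, QuadraticMap.polar Q x v = 0) → x = 0)
    (α : V ≃ₗ[R] V) (hα : ∀ v : V, Q (α v) = Q v)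
    (hemb : ∀ v : V, (v : A) * (α v : A) = algebraMap R A (Q v) ∧
      (α v : A) * (v : A) = algebraMap R A (Q v))
    (hmem : ∀ v w : V, (v : A) * (w : A) * (v : A) ∈ V) :
    ∀ v w : V,
      ((α ⟨(v : A) * (w : A) * (v : A), hmem v w⟩ : V) : A) =
        (α v : A) * (α w : A) * (α v : A) :=
  embedding_conj_vwv_general V Q α hα hemb hmem
end

section
/- Let (V,q) ⊆ A be an embedding of a quadratic space with isometry α, such that 1_A ∈ V and α(1_A) = 1_A. Then α has order dividing 2, i.e. α(α(v)) = v for all v ∈ V. -/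
/-!
Put `t(w) = q(w + 1) - q(w)`. Expanding `(w + 1) α(w + 1) = q(w + 1)` with `α 1 = 1` gives
`w + α w = t(w) - 1`, a scalar. Since `α` fixes `1` and preserves `q`, `t(α w) = t(w)`, so
`α w + α (α w) = w + α w`, and cancelling `α w` gives `α (α w) = w`.
-/

theorem coe_add_coe_map_eq_algebraMap_sub_one {R A : Type*} [CommRing R] [Ring A] [Algebra R A]
    {V : Submodule R A} (q : V → R) (α : V →+ V)
    (hmul : ∀ v : V, (v : A) * (α v : A) = algebraMap R A (q v))
    {e : V} (he : (e : A) = 1) (hαe : α e = e) (w : V) :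
    (w : A) + (α w : A) = algebraMap R A (q (w + e) - q w) - 1 := by
  have hexpand := hmul (w + e)
  rw [map_add, hαe, Submodule.coe_add, Submodule.coe_add, he] at hexpand
  rw [map_sub, ← hmul w, ← hexpand]
  noncomm_ring

theorem embedding_isometry_involutive_general {R A : Type*} [CommRing R] [Ring A] [Algebra R A]
    (V : Submodule R A) (Q : QuadraticForm R V)
    (α : V ≃ₗ[R] V) (hα : ∀ v : V, Q (α v) = Q v)
    (hemb : ∀ v : V, (v : A) * (α v : A) = algebraMap R A (Q v) ∧
      (α v : A) * (v : A) = algebraMap R A (Q v))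
    (h1 : (1 : A) ∈ V) (hα1 : α ⟨1, h1⟩ = ⟨1, h1⟩) :
    ∀ v : V, α (α v) = v := by
  intro v
  have hsum := coe_add_coe_map_eq_algebraMap_sub_one Q (α : V →+ V) (fun w => (hemb w).1)
    (e := ⟨1, h1⟩) rfl hα1
  have hQ : Q (α v + ⟨1, h1⟩) = Q (v + ⟨1, h1⟩) := by
    rw [← hα (v + _), map_add α, hα1]
  have hshift := hsum (α v)
  rw [hα, hQ, ← hsum v, add_comm (v : A)] at hshift
  exact Subtype.ext (add_left_cancel hshift)

/-- If 1_A ∈ V and α(1_A) = 1_A, then the isometry α of the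
embedding has order dividing 2: α(α(v)) = v for all v ∈ V. -/
theorem embedding_isometry_involutive {R A : Type*} [CommRing R] [Ring A] [Algebra R A]
    (V : Submodule R A) [Module.Free R V] (Q : QuadraticForm R V)
    (α : V ≃ₗ[R] V) (hα : ∀ v : V, Q (α v) = Q v)
    (hemb : ∀ v : V, (v : A) * (α v : A) = algebraMap R A (Q v) ∧
      (α v : A) * (v : A) = algebraMap R A (Q v))
    (h1 : (1 : A) ∈ V) (hα1 : α ⟨1, h1⟩ = ⟨1, h1⟩) :
    ∀ v : V, α (α v) = v :=
  embedding_isometry_involutive_general V Q α hα hemb h1 hα1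
end

section
/- Let (V,q) ⊆ A be an embedding with isometry α (v̄ = α(v)) and suppose 1_A ∈ V with ᾱ(1)=1. Let v ∈ V be such that {v, 1} are R-linearly independent (in the sense that v + r·1 being zero forces r=0 and the coefficient of v zero). If v' ∈ V is such that v + v' ∈ R·1 and v·v' ∈ R·1, then v' = α(v). -/
/-!
Polarizing `v * α v = q v` at `v` and at `v + 1` (using `α 1 = 1`) shows that `v + α v` is a
scalar. Then `v' - α v = c` is a scalar as well, and `v * (v' - α v) = c • v` is a scalar too;
the independence of `v` and `1` forces `c = 0`.
-/

section ScalarComplement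

variable {R A : Type*} [CommRing R] [Ring A] [Algebra R A]

theorem add_eq_algebraMap_of_mul_eq_algebraMap {x y : A} {a b : R}
    (h : x * y = algebraMap R A a) (h₁ : (x + 1) * (y + 1) = algebraMap R A b) :
    x + y = algebraMap R A (b - a - 1) := by
  have expand : (x + 1) * (y + 1) = x * y + (x + y) + 1 := by noncomm_ring
  rw [expand, h] at h₁
  rw [map_sub, map_sub, map_one, ← h₁]
  abel

theorem eq_of_add_eq_algebraMap_of_mul_eq_algebraMap {x y z : A}
    (hli : ∀ s r : R, s • x + algebraMap R A r = 0 → s = 0 ∧ r = 0)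
    (hy : ∃ r, x + y = algebraMap R A r) (hz : ∃ r, x + z = algebraMap R A r)
    (hxy : ∃ r, x * y = algebraMap R A r) (hxz : ∃ r, x * z = algebraMap R A r) :
    y = z := by
  obtain ⟨r, hr⟩ := hy
  obtain ⟨s, hs⟩ := hz
  obtain ⟨t, ht⟩ := hxy
  obtain ⟨u, hu⟩ := hxz
  have hdiff : y - z = algebraMap R A (r - s) := by
    rw [map_sub, ← hr, ← hs]
    abel
  have hcomb : (r - s) • x + algebraMap R A (u - t) = 0 := by
    rw [Algebra.smul_def, Algebra.commutes, ← hdiff, mul_sub, ht, hu, map_sub]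
    abel
  rw [← sub_eq_zero, hdiff, (hli _ _ hcomb).1, map_zero]

theorem Submodule.exists_add_equiv_eq_algebraMap (V : Submodule R A) (q : V → R)
    (α : V ≃ₗ[R] V)
    (hmul : ∀ v : V, (v : A) * (α v : A) = algebraMap R A (q v))
    (h1 : (1 : A) ∈ V) (hα1 : α ⟨1, h1⟩ = ⟨1, h1⟩) (v : V) :
    ∃ r, (v : A) + (α v : A) = algebraMap R A r := by
  have h := hmul (v + ⟨1, h1⟩)
  rw [map_add, hα1] at h
  exact ⟨_, add_eq_algebraMap_of_mul_eq_algebraMap (hmul v) h⟩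

end ScalarComplement

theorem embedding_lemma1_general {R A : Type*} [CommRing R] [Ring A] [Algebra R A]
    (V : Submodule R A) (Q : QuadraticForm R V)
    (α : V ≃ₗ[R] V)
    (hemb : ∀ v : V, (v : A) * (α v : A) = algebraMap R A (Q v) ∧
      (α v : A) * (v : A) = algebraMap R A (Q v))
    (h1 : (1 : A) ∈ V) (hα1 : α ⟨1, h1⟩ = ⟨1, h1⟩)
    (v : V) (hli : ∀ s r : R, s • (v : A) + algebraMap R A r = 0 → s = 0 ∧ r = 0)
    (v' : V) (hsum : ∃ r : R, (v : A) + (v' : A) = algebraMap R A r)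
    (hprod : ∃ r : R, (v : A) * (v' : A) = algebraMap R A r) :
    v' = α v := by
  have hmul (w : V) : (w : A) * (α w : A) = algebraMap R A (Q w) := (hemb w).1
  have hconj := V.exists_add_equiv_eq_algebraMap Q α hmul h1 hα1 v
  exact Subtype.ext <|
    eq_of_add_eq_algebraMap_of_mul_eq_algebraMap hli hsum hconj hprod ⟨_, hmul v⟩

/-- Lemma 1: Suppose 1_A ∈ V, α(1)=1. Let v ∈ V with {v,1}
linearly independent (s•v + r·1 = 0 forces s = 0 and r = 0). If v' ∈ V is such
that v + v' and v·v' are scalars, then v' = α(v). -/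
theorem embedding_lemma1 {R A : Type*} [CommRing R] [Ring A] [Algebra R A]
    (V : Submodule R A) (Q : QuadraticForm R V)
    (α : V ≃ₗ[R] V) (hα : ∀ v : V, Q (α v) = Q v)
    (hemb : ∀ v : V, (v : A) * (α v : A) = algebraMap R A (Q v) ∧
      (α v : A) * (v : A) = algebraMap R A (Q v))
    (h1 : (1 : A) ∈ V) (hα1 : α ⟨1, h1⟩ = ⟨1, h1⟩)
    (v : V) (hli : ∀ s r : R, s • (v : A) + algebraMap R A r = 0 → s = 0 ∧ r = 0)
    (v' : V) (hsum : ∃ r : R, (v : A) + (v' : A) = algebraMap R A r)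
    (hprod : ∃ r : R, (v : A) * (v' : A) = algebraMap R A r) :
    v' = α v :=
  embedding_lemma1_general V Q α hemb h1 hα1 v hli v' hsum hprod
end

section
/- Let (V,q) ⊆ A be an embedding with isometry α and 1_A ∈ V, α(1)=1. Let v₁, v₂ ∈ V with q(v₂) = 1 (so v₂·α(v₂) = 1). Then α(v₁) + v₂·v₁·v₂ ∈ v₂·R, i.e. there exists r ∈ R with α(v₁) + v₂v₁v₂ = r·v₂. -/
/-!
Polarizing `v * α v = q v` gives `u * α w + w * α u = polar q u w`; taking `w = 1` shows that
`α u = t u - u` with the scalar `t u = polar q u 1`, so `α` acts like a conjugation. Expanding,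
`α u * α w + w * u = t u * t w - polar q u w` is a scalar. For `u = v₁`, `w = v₂`, multiply on
the right by `v₂` and use `α v₂ * v₂ = q v₂ = 1`.
-/

section Embedding

variable {R A : Type*} [CommRing R] [Ring A] [Algebra R A] {V : Submodule R A}
  (Q : QuadraticForm R V) (α : V →ₗ[R] V)
  (hnorm : ∀ v : V, (v : A) * α v = algebraMap R A (Q v))
include hnorm

open QuadraticMap

theorem mul_map_add_mul_map_eq_polar (u w : V) :
    (u : A) * α w + w * α u = algebraMap R A (polar Q u w) := by
  have h := hnorm (u + w)
  rw [map_add, Submodule.coe_add, Submodule.coe_add, add_mul, mul_add, mul_add, hnorm u, hnorm w]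
    at h
  rw [polar, map_sub, map_sub, ← h]
  abel

variable {e : V} (he : (e : A) = 1) (hαe : α e = e)
include he hαe

theorem map_eq_polar_sub (u : V) : (α u : A) = algebraMap R A (polar Q u e) - u := by
  have h := mul_map_add_mul_map_eq_polar Q α hnorm u e
  rw [hαe, he, mul_one, one_mul] at h
  rw [← h, add_sub_cancel_left]

theorem map_mul_map_add_mul_eq_algebraMap (u w : V) :
    (α u : A) * α w + w * u
      = algebraMap R A (polar Q u e * polar Q w e - polar Q u w) := by
  have h := mul_map_add_mul_map_eq_polar Q α hnorm u w
  rw [map_eq_polar_sub Q α hnorm he hαe u, map_eq_polar_sub Q α hnorm he hαe w] at h ⊢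
  rw [map_sub, map_mul, ← h]
  simp only [mul_sub, sub_mul, ← Algebra.commutes (polar Q w e) (u : A),
    ← Algebra.commutes (polar Q u e) (w : A)]
  abel

end Embedding

theorem embedding_lemma2_general {R A : Type*} [CommRing R] [Ring A] [Algebra R A]
    (V : Submodule R A) (Q : QuadraticForm R V)
    (α : V ≃ₗ[R] V)
    (hemb : ∀ v : V, (v : A) * (α v : A) = algebraMap R A (Q v) ∧
      (α v : A) * (v : A) = algebraMap R A (Q v))
    (h1 : (1 : A) ∈ V) (hα1 : α ⟨1, h1⟩ = ⟨1, h1⟩)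
    (v₁ v₂ : V) (hq2 : Q v₂ = 1) :
    ∃ r : R, (α v₁ : A) + (v₂ : A) * (v₁ : A) * (v₂ : A) = r • (v₂ : A) := by
  obtain ⟨r, hr⟩ : ∃ r, (α v₁ : A) * α v₂ + v₂ * v₁ = algebraMap R A r :=
    ⟨_, map_mul_map_add_mul_eq_algebraMap Q α.toLinearMap (fun v => (hemb v).1)
      (e := ⟨1, h1⟩) rfl hα1 v₁ v₂⟩
  have hv₂ : (α v₂ : A) * v₂ = 1 := by rw [(hemb v₂).2, hq2, map_one]
  refine ⟨r, ?_⟩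
  calc (α v₁ : A) + v₂ * v₁ * v₂ = ((α v₁ : A) * α v₂ + v₂ * v₁) * v₂ := by
        rw [add_mul, mul_assoc (α v₁ : A), hv₂, mul_one]
    _ = r • (v₂ : A) := by rw [hr, Algebra.smul_def]

/-- Lemma 2: Suppose 1_A ∈ V, α(1)=1. Let v₁, v₂ ∈ V with
q(v₂) = 1. Then α(v₁) + v₂·v₁·v₂ ∈ v₂·R, i.e. there is r ∈ R with
α(v₁) + v₂v₁v₂ = r • v₂. -/
theorem embedding_lemma2 {R A : Type*} [CommRing R] [Ring A] [Algebra R A]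
    (V : Submodule R A) (Q : QuadraticForm R V)
    (α : V ≃ₗ[R] V) (hα : ∀ v : V, Q (α v) = Q v)
    (hemb : ∀ v : V, (v : A) * (α v : A) = algebraMap R A (Q v) ∧
      (α v : A) * (v : A) = algebraMap R A (Q v))
    (h1 : (1 : A) ∈ V) (hα1 : α ⟨1, h1⟩ = ⟨1, h1⟩)
    (v₁ v₂ : V) (hq2 : Q v₂ = 1) :
    ∃ r : R, (α v₁ : A) + (v₂ : A) * (v₁ : A) * (v₂ : A) = r • (v₂ : A) :=
  embedding_lemma2_general V Q α hemb h1 hα1 v₁ v₂ hq2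
end

section
/- Let (V,q) be a non-degenerate quadratic space over a commutative ring R, and J a Z₂-graded two-sided ideal of the Clifford algebra Cl(V,q) with J ∩ R·1 = {0}. Then J = {0}. -/
/-!
The graded commutator `x ↦ v * x - involute x * v` on `Cl(V, q)` is the contraction with the
dual vector `⟨v, ·⟩`, so a graded ideal is stable under these contractions. For
`v = ∑ⱼ adj(G)ᵢⱼ bⱼ`, with `G` the Gram matrix, this dual vector is `det G • bᵢ*`.
Bourbaki's linear isomorphism `Cl(V, q) ≃ Λ V` commutes with contractions, and on the basis of
sorted wedge monomials the contraction with `bᵢ*` sends `e_T` to `±e_{T \ i}` (or to `0` if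
`i ∉ T`). So if `x` lies in the ideal and has no coefficients in degree `> m + 1`, each
`det G • (bᵢ* ⌋ x)` lies in the ideal with no coefficients in degree `> m`, hence vanishes by
induction on `m`; reading off its coefficient at `T \ i` gives `± det G • x_T = 0`, so `x_T = 0`
because `det G` is a non-zero-divisor. In degree `0`, `x` is a scalar in the ideal, hence `0`.
-/

open CliffordAlgebra

namespace ExteriorAlgebra

variable {R M I : Type*} [CommRing R] [AddCommGroup M] [Module R M] (b : Module.Basis I R M)

section LinearOrder

variable [LinearOrder I]

theorem basis_eq_prod_sort (s : Finset I) :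
    b.ExteriorAlgebra s = (s.sort.map fun i => ι R (b i)).prod := by
  rw [basis_apply]
  simp only [ιMulti_family, ιMulti_apply, Set.powersetCard.prodEquiv_symm_apply,
    Set.powersetCard.ofFinEmbEquiv_symm_apply, List.ofFn_eq_map, Function.comp_apply]
  rw [← Finset.listMap_orderEmbOfFin_finRange s rfl, List.map_map]
  rfl

theorem basis_empty : b.ExteriorAlgebra ∅ = 1 := by
  simp [basis_eq_prod_sort]

theorem basis_insert_of_lt {a : I} {s : Finset I} (ha : ∀ x ∈ s, a < x) :
    b.ExteriorAlgebra (insert a s) = ι R (b a) * b.ExteriorAlgebra s := by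
  have has : a ∉ s := fun h => lt_irrefl a (ha a h)
  rw [basis_eq_prod_sort, basis_eq_prod_sort,
    Finset.sort_insert _ (fun x hx => (ha x hx).le) has, List.map_cons, List.prod_cons]

theorem contractLeft_coord_basis (i : I) (s : Finset I) :
    contractLeft (b.coord i) (b.ExteriorAlgebra s) =
      if i ∈ s then (-1 : R) ^ (s.filter (· < i)).card • b.ExteriorAlgebra (s.erase i)
      else 0 := by
  induction s using Finset.induction_on_min with
  | empty => simp [basis_empty, contractLeft_one]
  | insert a s ha ih =>
    have has : a ∉ s := fun h => lt_irrefl a (ha a h)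
    rw [basis_insert_of_lt b ha, contractLeft_ι_mul, Module.Basis.coord_apply,
      Module.Basis.repr_self, Finsupp.single_apply]
    rcases eq_or_ne a i with rfl | hai
    · rw [if_neg has] at ih
      have hfilter : ((insert a s).filter (· < a)) = ∅ :=
        Finset.filter_eq_empty_iff.mpr fun x hx => by
          rcases Finset.mem_insert.mp hx with rfl | hx
          · exact lt_irrefl x
          · exact (ha x hx).not_gt
      simp [ih, hfilter, Finset.erase_insert has]
    · rw [if_neg hai, zero_smul, zero_sub, ih]
      by_cases his : i ∈ s
      · have hai' : a < i := ha i his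
        rw [if_pos his, if_pos (Finset.mem_insert_of_mem his), Finset.filter_insert,
          if_pos hai', Finset.card_insert_of_notMem (fun h => has (Finset.mem_of_mem_filter a h)),
          Finset.erase_insert_of_ne hai, basis_insert_of_lt b
            (fun x hx => ha x (Finset.mem_of_mem_erase hx)), mul_smul_comm, pow_succ]
        simp
      · rw [if_neg his, if_neg (by simp [Ne.symm hai, his]), mul_zero, neg_zero]

theorem repr_contractLeft_coord (i : I) (t : Finset I) (x : ExteriorAlgebra R M) :
    b.ExteriorAlgebra.repr (contractLeft (b.coord i) x) t =
      if i ∈ t then 0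
      else (-1 : R) ^ (t.filter (· < i)).card * b.ExteriorAlgebra.repr x (insert i t) := by
  have key : b.ExteriorAlgebra.coord t ∘ₗ contractLeft (b.coord i) =
      if i ∈ t then 0
      else (-1 : R) ^ (t.filter (· < i)).card • b.ExteriorAlgebra.coord (insert i t) := by
    refine b.ExteriorAlgebra.ext fun s => ?_
    rw [LinearMap.comp_apply, contractLeft_coord_basis]
    by_cases hit : i ∈ t
    · have hne : s.erase i ≠ t := fun h => Finset.notMem_erase i s (h ▸ hit)
      split_ifs <;> simp [hne]
    · rw [if_neg hit]
      by_cases hs : s = insert i t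
      · subst hs
        have hfilter : (insert i t).filter (· < i) = t.filter (· < i) := by
          rw [Finset.filter_insert, if_neg (lt_irrefl i)]
        simp [Finset.erase_insert hit, hfilter]
      · by_cases his : i ∈ s
        · have hne : s.erase i ≠ t := fun h => hs (h ▸ (Finset.insert_erase his).symm)
          simp [his, hne, Ne.symm hs]
        · simp [his, Ne.symm hs]
  have := LinearMap.congr_fun key x
  split_ifs at this ⊢ <;> simpa using this

theorem eq_algebraMap_of_repr_eq_zero {x : ExteriorAlgebra R M}
    (hx : ∀ t : Finset I, t.Nonempty → b.ExteriorAlgebra.repr x t = 0) :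
    x = algebraMap R _ (b.ExteriorAlgebra.repr x ∅) := by
  refine b.ExteriorAlgebra.repr.injective (Finsupp.ext fun t => ?_)
  rw [Algebra.algebraMap_eq_smul_one, ← basis_empty b, map_smul, Module.Basis.repr_self]
  rcases t.eq_empty_or_nonempty with rfl | ht
  · simp
  · simp [hx t ht, ht.ne_empty]

theorem eq_zero_of_smul_contractLeft_coord_mem_of_card_lt {d : R} (hd : d ∈ nonZeroDivisors R)
    {N : Set (ExteriorAlgebra R M)}
    (hN : ∀ i, ∀ x ∈ N, d • contractLeft (b.coord i) x ∈ N)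
    (hR : ∀ r : R, algebraMap R _ r ∈ N → r = 0) (m : ℕ) :
    ∀ x ∈ N, (∀ t : Finset I, m < t.card → b.ExteriorAlgebra.repr x t = 0) → x = 0 := by
  induction m with
  | zero =>
    intro x hxN hx
    have hx_eq := eq_algebraMap_of_repr_eq_zero b fun t ht => hx t ht.card_pos
    have h0 : b.ExteriorAlgebra.repr x ∅ = 0 := hR _ (hx_eq ▸ hxN)
    rw [hx_eq, h0, map_zero]
  | succ m ih =>
    intro x hxN hx
    have hcontr (i : I) : d • contractLeft (b.coord i) x = 0 := by
      refine ih _ (hN i x hxN) fun t ht => ?_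
      rw [map_smul, Finsupp.smul_apply, repr_contractLeft_coord]
      split_ifs with hit
      · exact smul_zero d
      · rw [hx _ (by rw [Finset.card_insert_of_notMem hit]; omega), mul_zero, smul_zero]
    refine ih x hxN fun s hs => ?_
    rcases Nat.lt_or_ge (m + 1) s.card with hs' | hs'
    · exact hx s hs'
    obtain ⟨i, his⟩ := Finset.card_pos.mp (by omega : 0 < s.card)
    have := congr(b.ExteriorAlgebra.repr $(hcontr i) (s.erase i))
    rw [map_smul, Finsupp.smul_apply, repr_contractLeft_coord, if_neg (Finset.notMem_erase i s),
      Finset.insert_erase his, smul_eq_mul, map_zero, Finsupp.zero_apply,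
      mul_left_comm, (isUnit_neg_one.pow _).mul_right_eq_zero] at this
    exact (mem_nonZeroDivisors_iff.mp hd).2 _ (by rwa [mul_comm] at this)

end LinearOrder

theorem eq_zero_of_smul_contractLeft_coord_mem {d : R} (hd : d ∈ nonZeroDivisors R)
    {N : Set (ExteriorAlgebra R M)}
    (hN : ∀ i, ∀ x ∈ N, d • contractLeft (b.coord i) x ∈ N)
    (hR : ∀ r : R, algebraMap R _ r ∈ N → r = 0) :
    ∀ x ∈ N, x = 0 := by
  let : LinearOrder I := IsWellOrder.linearOrder WellOrderingRel
  intro x hx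
  refine eq_zero_of_smul_contractLeft_coord_mem_of_card_lt b hd hN hR
    ((b.ExteriorAlgebra.repr x).support.sup Finset.card) x hx fun t ht => ?_
  exact Finsupp.notMem_support_iff.mp fun h => (Finset.le_sup h).not_gt ht

end ExteriorAlgebra

namespace CliffordAlgebra

variable {R M : Type*} [CommRing R] [AddCommGroup M] [Module R M] (Q : QuadraticForm R M)

theorem contractLeft_polarBilin (v : M) (x : CliffordAlgebra Q) :
    contractLeft (QuadraticMap.polarBilin Q v) x = ι Q v * x - involute x * ι Q v := by
  induction x using CliffordAlgebra.left_induction with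
  | algebraMap r => simp [Algebra.commutes]
  | add x y hx hy => simp only [map_add, hx, hy, mul_add, add_mul]; abel
  | ι_mul x w hx =>
    rw [contractLeft_ι_mul, hx, map_mul, involute_ι, QuadraticMap.polarBilin_apply_apply,
      Algebra.smul_def, ← ι_mul_ι_add_swap]
    noncomm_ring

variable {Q}

theorem involute_mem_of_graded {J : TwoSidedIdeal (CliffordAlgebra Q)}
    (hgraded : ∀ x ∈ J, ∃ x₀ ∈ J, ∃ x₁ ∈ J,
      x₀ ∈ evenOdd Q 0 ∧ x₁ ∈ evenOdd Q 1 ∧ x = x₀ + x₁)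
    {x : CliffordAlgebra Q} (hx : x ∈ J) : involute x ∈ J := by
  obtain ⟨x₀, hx₀, x₁, hx₁, heven, hodd, rfl⟩ := hgraded x hx
  rw [map_add, involute_eq_of_mem_even heven, involute_eq_of_mem_odd hodd, ← sub_eq_add_neg]
  exact J.sub_mem hx₀ hx₁

theorem contractLeft_polarBilin_mem {J : TwoSidedIdeal (CliffordAlgebra Q)}
    (hJ : ∀ x ∈ J, involute x ∈ J) (v : M) {x : CliffordAlgebra Q} (hx : x ∈ J) :
    contractLeft (QuadraticMap.polarBilin Q v) x ∈ J := by
  rw [contractLeft_polarBilin]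
  exact J.sub_mem (J.mul_mem_left _ _ hx) (J.mul_mem_right _ _ (hJ x hx))

end CliffordAlgebra

theorem LinearMap.apply_sum_adjugate_toMatrix₂_smul {R M ι : Type*} [CommRing R]
    [AddCommGroup M] [Module R M] [Fintype ι] [DecidableEq ι]
    (B : M →ₗ[R] M →ₗ[R] R) (b : Module.Basis ι R M) (i : ι) :
    B (∑ j, (toMatrix₂ b b B).adjugate i j • b j) = (toMatrix₂ b b B).det • b.coord i := by
  refine b.ext fun k => ?_
  have := congr_fun (congr_fun (Matrix.adjugate_mul (toMatrix₂ b b B)) i) k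
  simp only [Matrix.mul_apply, toMatrix₂_apply, Matrix.smul_apply, Matrix.one_apply] at this
  simp [map_sum, this, Module.Basis.coord_apply, Finsupp.single_apply, eq_comm]

/-- If (V,q) is non-degenerate (the Gram determinant of the polar
form w.r.t. a basis is a non-zero-divisor) and J is a Z₂-graded two-sided ideal
of Cl(V,q) with J ∩ R·1 = {0}, then J = {0}. -/
theorem clifford_graded_ideal_trivial {R V ι : Type*} [CommRing R]
    [AddCommGroup V] [Module R V] [Fintype ι] [DecidableEq ι]
    (Q : QuadraticForm R V) (b : Module.Basis ι R V)
    (hnd : (Matrix.of fun i j => QuadraticMap.polar Q (b i) (b j)).det ∈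
      nonZeroDivisors R)
    (J : TwoSidedIdeal (CliffordAlgebra Q))
    (hgraded : ∀ x ∈ J, ∃ x₀ ∈ J, ∃ x₁ ∈ J,
      x₀ ∈ CliffordAlgebra.evenOdd Q 0 ∧ x₁ ∈ CliffordAlgebra.evenOdd Q 1 ∧
        x = x₀ + x₁)
    (hR : ∀ r : R, algebraMap R (CliffordAlgebra Q) r ∈ J → r = 0) :
    ∀ x ∈ J, x = 0 := by
  have : Module.Free R V := .of_basis b
  obtain ⟨B, hB⟩ := LinearMap.BilinMap.toQuadraticMap_surjective (0 - Q)
  let Φ : CliffordAlgebra Q ≃ₗ[R] ExteriorAlgebra R V := changeFormEquiv hB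
  let G := LinearMap.toMatrix₂ b b (QuadraticMap.polarBilin Q)
  have hG : Matrix.of (fun i j => QuadraticMap.polar Q (b i) (b j)) = G := by
    ext; simp [G]
  have hΦ (i : ι) (y : ExteriorAlgebra R V) :
      Φ.symm (G.det • contractLeft (b.coord i) y) =
        contractLeft (QuadraticMap.polarBilin Q (∑ j, G.adjugate i j • b j)) (Φ.symm y) := by
    rw [LinearMap.apply_sum_adjugate_toMatrix₂_smul, map_smul, map_smul, LinearMap.smul_apply]
    exact congr_arg _ (changeForm_contractLeft (changeForm.neg_proof hB) _ _)
  intro x hx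
  refine Φ.map_eq_zero_iff.mp <| ExteriorAlgebra.eq_zero_of_smul_contractLeft_coord_mem b
    (d := G.det) (N := {y | Φ.symm y ∈ J}) (hG ▸ hnd) (fun i y hy => ?_) (fun r hr => hR r ?_)
    (Φ x) (by simpa using hx)
  · rw [Set.mem_ofPred_eq, hΦ]
    exact contractLeft_polarBilin_mem (fun _ => involute_mem_of_graded hgraded) _ hy
  · simpa [Φ] using hr
end

section
/- For the Suslin matrix construction: S_n(v,w)·conj(S_n(v,w)) = conj(S_n(v,w))·S_n(v,w) = (v·wᵀ)·I_{2^n} for all vectors v, w ∈ R^{n+1}. -/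
/-- The pair (S_n(v,w), conj(S_n(v,w))) of Suslin matrices of size 2^n built from
vectors v, w ∈ R^{n+1}, defined recursively: S₀(v,w) = (a₀), conj S₀ = (b₀), and
S_n(v,w) = [[a₀I, S_{n−1}(v₁,w₁)],[−conj S_{n−1}(v₁,w₁), b₀I]],
conj S_n(v,w) = [[b₀I, −S_{n−1}(v₁,w₁)],[conj S_{n−1}(v₁,w₁), a₀I]]. -/
def suslinPair (R : Type*) [CommRing R] :
    (n : ℕ) → (Fin (n + 1) → R) → (Fin (n + 1) → R) →
      Matrix (Fin (2 ^ n)) (Fin (2 ^ n)) R × Matrix (Fin (2 ^ n)) (Fin (2 ^ n)) R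
  | 0, v, w => (v 0 • (1 : Matrix (Fin 1) (Fin 1) R),
                w 0 • (1 : Matrix (Fin 1) (Fin 1) R))
  | n + 1, v, w =>
      let p := suslinPair R n (fun i => v i.succ) (fun i => w i.succ)
      let e : Fin (2 ^ n) ⊕ Fin (2 ^ n) ≃ Fin (2 ^ (n + 1)) :=
        finSumFinEquiv.trans (finCongr (by rw [pow_succ, mul_two]))
      ((Matrix.reindex e e) (Matrix.fromBlocks (v 0 • 1) p.1 (-p.2) (w 0 • 1)),
       (Matrix.reindex e e) (Matrix.fromBlocks (w 0 • 1) (-p.1) p.2 (v 0 • 1)))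

/-! By induction on `n`: writing `S', T'` for the Suslin pair of the tails `v₁, w₁`, block
multiplication gives `S * conj S = [[a₀b₀ + S'T', 0], [0, T'S' + b₀a₀]]`, and the induction
hypothesis `S'T' = T'S' = (v₁ · w₁) I` turns this into `(v · w) I`. -/

namespace Matrix

variable {m R : Type*} [Fintype m] [DecidableEq m] [CommRing R]

theorem fromBlocks_smul_one_mul_fromBlocks_smul_one {A B : Matrix m m R} {c : R}
    (hAB : A * B = c • 1) (hBA : B * A = c • 1) (a b : R) :
    fromBlocks (a • 1) A (-B) (b • 1) * fromBlocks (b • 1) (-A) B (a • 1) =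
      (a * b + c) • (1 : Matrix (m ⊕ m) (m ⊕ m) R) := by
  rw [fromBlocks_multiply, ← fromBlocks_one, fromBlocks_smul, smul_zero]
  congr 1 <;> simp only [smul_one_mul, mul_smul_one, mul_neg, neg_mul, neg_neg, hAB, hBA] <;>
    module

theorem reindex_mul_reindex_eq_smul_one {n : Type*} [Fintype n] [DecidableEq n] (e : m ≃ n)
    {M N : Matrix m m R} {c : R} (h : M * N = c • 1) :
    reindex e e M * reindex e e N = c • (1 : Matrix n n R) := by
  rw [reindex_apply, reindex_apply, submatrix_mul_equiv, h, submatrix_smul,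
    Pi.smul_apply, Pi.smul_apply, submatrix_one_equiv]

end Matrix

open Matrix in
/-- S_n(v,w)·conj(S_n(v,w)) = conj(S_n(v,w))·S_n(v,w)
= (v·wᵀ)·I_{2^n} for all v, w ∈ R^{n+1}. -/
theorem suslin_mul_conj {R : Type*} [CommRing R] (n : ℕ)
    (v w : Fin (n + 1) → R) :
    (suslinPair R n v w).1 * (suslinPair R n v w).2 =
        (∑ i, v i * w i) • (1 : Matrix (Fin (2 ^ n)) (Fin (2 ^ n)) R) ∧
    (suslinPair R n v w).2 * (suslinPair R n v w).1 =
        (∑ i, v i * w i) • (1 : Matrix (Fin (2 ^ n)) (Fin (2 ^ n)) R) := by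
  induction n with
  | zero => constructor <;> simp [suslinPair, smul_smul, mul_comm]
  | succ n ih =>
    obtain ⟨hST, hTS⟩ := ih (fun i => v i.succ) (fun i => w i.succ)
    rw [Fin.sum_univ_succ]
    constructor
    · exact reindex_mul_reindex_eq_smul_one _
        (fromBlocks_smul_one_mul_fromBlocks_smul_one hST hTS _ _)
    -- `conj S` has the shape of `S` with `(a₀, b₀, S', T')` replaced by `(b₀, a₀, -S', -T')`.
    · have hblocks := fromBlocks_smul_one_mul_fromBlocks_smul_one
        ((neg_mul_neg _ _).trans hST) ((neg_mul_neg _ _).trans hTS) (w 0) (v 0)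
      rw [neg_neg, neg_neg, mul_comm] at hblocks
      exact reindex_mul_reindex_eq_smul_one _ hblocks
end

section
/- For Suslin matrices: det S_n(v,w) = (v·wᵀ)^{2^{n−1}} for all n ≥ 1 and all v, w ∈ R^{n+1}. -/
open Matrix

section BlockDeterminant

variable {R : Type*} [CommRing R] {p : Type*} [Fintype p] [DecidableEq p]

theorem det_fromBlocks_smul_one_mul_pow (A B C : Matrix p p R) (d : R) :
    det (fromBlocks A B C (d • 1)) * d ^ Fintype.card p =
      det (d • A - B * C) * d ^ Fintype.card p := by
  have hmul : fromBlocks A B C (d • 1) * fromBlocks (d • 1) 0 (-C) 1 =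
      fromBlocks (d • A - B * C) B 0 (d • 1) := by
    simp [fromBlocks_multiply, sub_eq_add_neg]
  have := congrArg det hmul
  simpa [det_mul, det_fromBlocks_zero₁₂, det_fromBlocks_zero₂₁, det_smul] using this

theorem det_fromBlocks_smul_one (A B C : Matrix p p R) (d : R) :
    det (fromBlocks A B C (d • 1)) = det (d • A - B * C) := by
  -- cancel `X ^ card p` over `R[X]`, where `X` is regular, then specialise `X` to `d`
  have h := det_fromBlocks_smul_one_mul_pow (A.map Polynomial.C) (B.map Polynomial.C)
    (C.map Polynomial.C) Polynomial.X
  have h' := congrArg (Polynomial.eval d) ((Polynomial.isRegular_X_pow _).right.eq_iff.mp h)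
  simp only [← Polynomial.coe_evalRingHom, RingHom.map_det, map_sub, map_mul,
    RingHom.mapMatrix_apply, fromBlocks_map, Matrix.map_map] at h'
  simpa [Function.comp_def, Matrix.map_smul', Matrix.map_one] using h'

end BlockDeterminant

section Suslin

variable {R : Type*} [CommRing R]

theorem fromBlocks_smul_one_mul_fromBlocks_smul_one {p : Type*} [Fintype p] [DecidableEq p]
    (a b s : R) (X Y : Matrix p p R) (hXY : X * Y = s • 1) (hYX : Y * X = s • 1) :
    fromBlocks (a • 1) X (-Y) (b • 1) * fromBlocks (b • 1) (-X) Y (a • 1) = (a * b + s) • 1 ∧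
      fromBlocks (b • 1) (-X) Y (a • 1) * fromBlocks (a • 1) X (-Y) (b • 1) =
        (a * b + s) • 1 := by
  simp only [fromBlocks_multiply, ← fromBlocks_one, fromBlocks_smul, smul_zero, hXY, hYX,
    Matrix.smul_mul, Matrix.mul_smul, Matrix.one_mul, Matrix.mul_one, Matrix.neg_mul,
    Matrix.mul_neg, neg_neg, smul_smul, smul_neg, neg_add_cancel, add_neg_cancel,
    mul_comm b a, add_comm (s • (1 : Matrix p p R)), add_smul, fromBlocks_add, add_zero, and_self]

def suslinBlockEquiv (n : ℕ) : Fin (2 ^ n) ⊕ Fin (2 ^ n) ≃ Fin (2 ^ (n + 1)) :=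
  finSumFinEquiv.trans (finCongr (by rw [pow_succ, mul_two]))

theorem suslinPair_succ (n : ℕ) (v w : Fin (n + 2) → R) :
    suslinPair R (n + 1) v w =
      (reindexAlgEquiv R R (suslinBlockEquiv n) (fromBlocks (v 0 • 1)
          (suslinPair R n (Fin.tail v) (Fin.tail w)).1
          (-(suslinPair R n (Fin.tail v) (Fin.tail w)).2) (w 0 • 1)),
        reindexAlgEquiv R R (suslinBlockEquiv n) (fromBlocks (w 0 • 1)
          (-(suslinPair R n (Fin.tail v) (Fin.tail w)).1)
          (suslinPair R n (Fin.tail v) (Fin.tail w)).2 (v 0 • 1))) :=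
  rfl

theorem suslinPair_mul (n : ℕ) (v w : Fin (n + 1) → R) :
    (suslinPair R n v w).1 * (suslinPair R n v w).2 = (∑ i, v i * w i) • 1 ∧
      (suslinPair R n v w).2 * (suslinPair R n v w).1 = (∑ i, v i * w i) • 1 := by
  induction n with
  | zero =>
    simp [suslinPair, smul_smul, mul_comm (w 0)]
  | succ n ih =>
    obtain ⟨h₁, h₂⟩ := fromBlocks_smul_one_mul_fromBlocks_smul_one (v 0) (w 0) _ _ _
      (ih (Fin.tail v) (Fin.tail w)).1 (ih (Fin.tail v) (Fin.tail w)).2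
    rw [suslinPair_succ, Fin.sum_univ_succ]
    simp only [← map_mul, h₁, h₂, map_smul, map_one, Fin.tail, and_self]

end Suslin

/-- det S_n(v,w) = (v·wᵀ)^{2^{n−1}} for all n ≥ 1 and
v, w ∈ R^{n+1}. -/
theorem suslin_det {R : Type*} [CommRing R] (n : ℕ) (hn : 1 ≤ n)
    (v w : Fin (n + 1) → R) :
    ((suslinPair R n v w).1).det = (∑ i, v i * w i) ^ (2 ^ (n - 1)) := by
  obtain ⟨m, rfl⟩ : ∃ m, n = m + 1 := ⟨n - 1, by omega⟩
  have hmul := (suslinPair_mul m (Fin.tail v) (Fin.tail w)).1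
  rw [suslinPair_succ, coe_reindexAlgEquiv, det_reindex_self, det_fromBlocks_smul_one,
    Matrix.mul_neg, sub_neg_eq_add, hmul, smul_smul, ← add_smul, det_smul, det_one, mul_one,
    Fintype.card_fin, Fin.sum_univ_succ (fun i => v i * w i), mul_comm (w 0),
    Nat.add_sub_cancel]
  rfl
end
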